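/- Let 0 < c < p and 0 ≤ a < b be reals, and set q* = a + (b−a)·(p−c)/p and α = (p−c)/p. Then the pushforward of the uniform measure Unif[a, b] under the profit map ω ↦ p·min(ω, q*) − c·q* equals the α-cut uniform measure U_α[p·a − c·q*, (p−c)·q*]. -/
import Mathlib


open MeasureTheory ProbabilityTheory
open scoped NNReal ENNReal

/-- The uniform probability measure on the interval `[a, b]`. -/
noncomputable def unif (a b : ℝ) : Measure ℝ :=
  (ENNReal.ofReal (b - a))⁻¹ • (volume.restrict (Set.Icc a b))

/-- The `α`-cut uniform measure `U_α[a, b] = α·Unif[a,b] + (1−α)·δ_b`. -/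
noncomputable def alphaCutUnif (α a b : ℝ) : Measure ℝ :=
  ENNReal.ofReal α • unif a b + ENNReal.ofReal (1 - α) • Measure.dirac b

lemma unif_Iic (a b : ℝ) (hab : a < b) (x : ℝ) :
    unif a b (Set.Iic x) = ENNReal.ofReal ((min b x - a) / (b - a)) := by
  have hba : 0 < b - a := by linarith
  have hI : Set.Icc a b ∩ Set.Iic x = Set.Icc a (min b x) := by
    rw [← Set.Ici_inter_Iic, Set.inter_assoc, Set.Iic_inter_Iic, Set.Ici_inter_Iic]
  rw [unif, Measure.smul_apply, Measure.restrict_apply measurableSet_Iic,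
    Set.inter_comm, hI, Real.volume_Icc, smul_eq_mul,
    ← ENNReal.ofReal_inv_of_pos hba, ← ENNReal.ofReal_mul (by positivity),
    div_eq_mul_inv, mul_comm]

lemma unif_univ (a b : ℝ) (hab : a < b) : unif a b Set.univ = 1 := by
  have hba : 0 < b - a := by linarith
  rw [unif, Measure.smul_apply, Measure.restrict_apply MeasurableSet.univ,
    Set.univ_inter, Real.volume_Icc, smul_eq_mul,
    ENNReal.inv_mul_cancel ((ENNReal.ofReal_pos.mpr hba).ne') (by simp)]

/-- The newsvendor profit under the expected-profit-optimal order quantity, for uniformly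
distributed demand on `[a, b]`, follows an `α`-cut uniform distribution with
`α = (p − c)/p`. -/
theorem newsvendor_profit_dist (c p a b qStar : ℝ) (hc : 0 < c) (hcp : c < p)
    (ha : 0 ≤ a) (hab : a < b) (hq : qStar = a + (b - a) * (p - c) / p) :
    (unif a b).map (fun ω => p * min ω qStar - c * qStar) =
      alphaCutUnif ((p - c) / p) (p * a - c * qStar) ((p - c) * qStar) := by
  have hp : 0 < p := hc.trans hcp
  have hpc : 0 < p - c := by linarith
  have hba : 0 < b - a := by linarith
  have hα0 : 0 < (p - c) / p := div_pos hpc hp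
  have hα1 : (p - c) / p < 1 := (div_lt_one hp).mpr (by linarith)
  have hqa : a < qStar := by
    rw [hq]; have : 0 < (b - a) * (p - c) / p := by positivity
    linarith
  have hqb : qStar ≤ b := by
    rw [hq]
    have : (b - a) * (p - c) / p < b - a := by
      rw [div_lt_iff₀ hp]; nlinarith
    linarith
  set L := p * a - c * qStar with hL
  set U := (p - c) * qStar with hU
  have hLU : L < U := by
    have : U - L = p * (qStar - a) := by ring
    nlinarith
  have hULne : U - L ≠ 0 := by linarith
  have hf : Measurable fun ω : ℝ => p * min ω qStar - c * qStar :=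
    (measurable_const.mul (measurable_id.min measurable_const)).sub measurable_const
  have hprob : IsProbabilityMeasure (unif a b) := ⟨unif_univ a b hab⟩
  refine Measure.ext_of_Iic _ _ fun x => ?_
  rw [Measure.map_apply hf measurableSet_Iic]
  simp only [alphaCutUnif, Measure.add_apply, Measure.smul_apply, smul_eq_mul]
  rcases le_or_gt U x with hx | hx
  · -- x ≥ U : both sides are 1
    have hpre : (fun ω : ℝ => p * min ω qStar - c * qStar) ⁻¹' Set.Iic x = Set.univ := by
      ext ω
      simp only [Set.mem_preimage, Set.mem_Iic, Set.mem_univ, iff_true]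
      have hm : min ω qStar ≤ qStar := min_le_right _ _
      nlinarith
    rw [hpre, unif_univ a b hab, unif_Iic _ _ hLU, min_eq_left hx,
      Measure.dirac_apply_of_mem (Set.mem_Iic.mpr hx), div_self hULne, ENNReal.ofReal_one,
      mul_one, mul_one, ← ENNReal.ofReal_add hα0.le (by linarith)]
    norm_num
  · -- x < U
    set t := (x + c * qStar) / p with htdef
    have ht : p * t = x + c * qStar := by rw [htdef]; field_simp
    have htq : t < qStar := by nlinarith
    have hpre : (fun ω : ℝ => p * min ω qStar - c * qStar) ⁻¹' Set.Iic x = Set.Iic t := by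
      ext ω
      simp only [Set.mem_preimage, Set.mem_Iic]
      constructor
      · intro h
        rcases le_total ω qStar with h' | h'
        · rw [min_eq_left h'] at h; nlinarith
        · rw [min_eq_right h'] at h; nlinarith
      · intro h
        have hm : min ω qStar ≤ t := le_trans (min_le_left _ _) h
        nlinarith
    rw [hpre, unif_Iic a b hab, unif_Iic _ _ hLU, min_eq_right hx.le,
      Measure.dirac_apply' _ measurableSet_Iic,
      Set.indicator_of_notMem (show U ∉ Set.Iic x from fun h => hx.not_ge h), mul_zero, add_zero,
      ← ENNReal.ofReal_mul hα0.le]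
    congr 1
    rw [min_eq_right (htq.le.trans hqb)]
    have h1 : U - L = p * (qStar - a) := by ring
    have h2 : x - L = p * (t - a) := by rw [hL]; linarith
    have h3 : p * (qStar - a) = (b - a) * (p - c) := by
      rw [hq]; field_simp; ring
    rw [h1, h2, h3]
    field_simp
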